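/- arXiv:2004.03239 — 2 statements merged into one kernel-verified Lean document; each statement's English description precedes it below -/
import Mathlib

section
/- If F satisfies (S1) {g} ∈ F for all g ∈ G, (S2) closure under subsets, (S3) closure under finite unions, (A2) closure under sumsets, and (A4) closure under finite-sum closure of subsets of G^{≥0}, then k((F)) is a Hahn field in k((G)), i.e. a subfield containing all monomials α t^g for α ∈ k, g ∈ G. -/
open scoped Pointwise

/-! Only inversion needs work. For `x ≠ 0` with order `v` and leading coefficient `c`, the series
`y = 1 - c⁻¹ t^(-v) x` has positive order and `x⁻¹ = c⁻¹ t^(-v) ∑ yⁿ`. Hence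
`supp y ⊆ {0} ∪ (-v + supp x)` lies in `F` and in `G^{≥0}`, and
`supp x⁻¹ ⊆ -v + ⟨supp y⟩`, which lies in `F` by (A4) and (A2). -/

namespace HahnSeries

variable {Γ R : Type*}

theorem support_one_subset [PartialOrder Γ] [AddCommMonoid Γ] [IsOrderedCancelAddMonoid Γ]
    [Semiring R] :
    (1 : R⟦Γ⟧).support ⊆ {0} := by
  rw [← single_zero_one]
  exact support_single_subset

theorem support_single_mul_subset [PartialOrder Γ] [AddCommMonoid Γ] [IsOrderedCancelAddMonoid Γ]
    [Semiring R] (a : Γ) (r : R) (x : R⟦Γ⟧) :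
    (single a r * x).support ⊆ {a} + x.support := by
  intro g hg
  obtain ⟨i, hi, j, hj, rfl⟩ := support_mul_subset hg
  exact Set.add_mem_add (support_single_subset hi) hj

theorem support_one_sub_single_mul_subset [PartialOrder Γ] [AddCommMonoid Γ]
    [IsOrderedCancelAddMonoid Γ] [Ring R] (a : Γ) (r : R) (x : R⟦Γ⟧) :
    (1 - single a r * x).support ⊆ {0} ∪ ({a} + x.support) :=
  (support_sub_subset _ _).trans <|
    Set.union_subset_union support_one_subset (support_single_mul_subset a r x)

theorem support_subset_nonneg_of_orderTop_pos [LinearOrder Γ] [Zero Γ] [Zero R] {x : R⟦Γ⟧}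
    (hx : 0 < x.orderTop) : x.support ⊆ {g | 0 ≤ g} := fun _ hg =>
  WithTop.coe_le_coe.mp (hx.le.trans (orderTop_le_of_coeff_ne_zero hg))

section Field

variable [AddCommGroup Γ] [LinearOrder Γ] [IsOrderedAddMonoid Γ] [Field R]

theorem support_hsum_powers_subset_closure {x : R⟦Γ⟧} (hx : 0 < x.orderTop) :
    (SummableFamily.powers x).hsum.support ⊆ AddSubmonoid.closure x.support := by
  refine SummableFamily.support_hsum_subset.trans (Set.iUnion_subset fun n => ?_)
  rw [SummableFamily.powers_of_orderTop_pos hx]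
  exact SummableFamily.support_pow_subset_closure x n

theorem orderTop_one_sub_single_inv_leadingCoeff_mul_pos {x : R⟦Γ⟧} (hx : x ≠ 0) :
    0 < (1 - single (-x.order) x.leadingCoeff⁻¹ * x).orderTop :=
  unit_aux x (inv_mul_cancel₀ (leadingCoeff_ne_zero.mpr hx)) _ (neg_add_cancel x.order)

theorem support_inv_subset {x : R⟦Γ⟧} (hx : x ≠ 0) :
    x⁻¹.support ⊆ {-x.order} +
      AddSubmonoid.closure (1 - single (-x.order) x.leadingCoeff⁻¹ * x).support := by
  rw [inv_def]
  exact (support_single_mul_subset _ _ _).trans <| Set.add_subset_add_left <|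
    support_hsum_powers_subset_closure (orderTop_one_sub_single_inv_leadingCoeff_mul_pos hx)

end Field

end HahnSeries

section SupportFamily

variable {G k : Type*} [AddCommGroup G] [LinearOrder G] [IsOrderedAddMonoid G] [Field k]
  {F : Set (Set G)}

open HahnSeries

theorem support_inv_mem_of_support_mem (hS1 : ∀ g : G, ({g} : Set G) ∈ F)
    (hS2 : ∀ A ∈ F, ∀ B ⊆ A, B ∈ F) (hS3 : ∀ A ∈ F, ∀ B ∈ F, A ∪ B ∈ F)
    (hA2 : ∀ A ∈ F, ∀ B ∈ F, A + B ∈ F)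
    (hA4 : ∀ A ∈ F, A ⊆ {g : G | 0 ≤ g} → (AddSubmonoid.closure A : Set G) ∈ F)
    {x : HahnSeries G k} (hx : x.support ∈ F) : x⁻¹.support ∈ F := by
  obtain rfl | hx0 := eq_or_ne x 0
  · simpa using hx
  set y := 1 - single (-x.order) x.leadingCoeff⁻¹ * x
  have hy : y.support ∈ F :=
    hS2 _ (hS3 _ (hS1 0) _ (hA2 _ (hS1 _) _ hx)) _ (support_one_sub_single_mul_subset _ _ x)
  have hy_nonneg : y.support ⊆ {g | 0 ≤ g} :=
    support_subset_nonneg_of_orderTop_pos (orderTop_one_sub_single_inv_leadingCoeff_mul_pos hx0)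
  exact hS2 _ (hA2 _ (hS1 _) _ (hA4 _ hy hy_nonneg)) _ (support_inv_subset hx0)

end SupportFamily

theorem khull_is_hahnField_general
    {G : Type*} [AddCommGroup G] [LinearOrder G] [IsOrderedAddMonoid G] {k : Type*} [Field k]
    (F : Set (Set G))
    (hS1 : ∀ g : G, ({g} : Set G) ∈ F)
    (hS2 : ∀ A ∈ F, ∀ B ⊆ A, B ∈ F)
    (hS3 : ∀ A ∈ F, ∀ B ∈ F, A ∪ B ∈ F)
    (hA2 : ∀ A ∈ F, ∀ B ∈ F, A + B ∈ F)
    (hA4 : ∀ A ∈ F, A ⊆ {g : G | 0 ≤ g} → (AddSubmonoid.closure A : Set G) ∈ F) :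
    ∃ K : Subfield (HahnSeries G k),
      (K : Set (HahnSeries G k)) = {a : HahnSeries G k | a.support ∈ F} ∧
      ∀ (α : k) (g : G), HahnSeries.single g α ∈ K := by
  have hsingle (α : k) (g : G) : (HahnSeries.single g α).support ∈ F :=
    hS2 _ (hS1 g) _ HahnSeries.support_single_subset
  refine ⟨{
      carrier := {a : HahnSeries G k | a.support ∈ F}
      zero_mem' := by simpa using hsingle 0 0
      one_mem' := by simpa using hsingle 1 0
      add_mem' := fun ha hb => hS2 _ (hS3 _ ha _ hb) _ (HahnSeries.support_add_subset _ _)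
      neg_mem' := fun ha => by simpa only [Set.mem_ofPred_eq, HahnSeries.support_neg] using ha
      mul_mem' := fun ha hb => hS2 _ (hA2 _ ha _ hb) _ HahnSeries.support_mul_subset
      inv_mem' := fun _ hx => support_inv_mem_of_support_mem hS1 hS2 hS3 hA2 hA4 hx },
    rfl, hsingle⟩

/-- If `F` satisfies (S1) all singletons `{g} ∈ F`, (S2) closure under
subsets, (S3) closure under finite unions, (A2) closure under sumsets, and (A4) closure
under finite-sum closures of members contained in `G^{≥0}`, then `k((F))` is a Hahn field
in `k((G))`: a subfield containing all monomials `α t^g` for `α ∈ k`, `g ∈ G`. -/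
theorem khull_is_hahnField
    {G : Type*} [AddCommGroup G] [LinearOrder G] [IsOrderedAddMonoid G] {k : Type*} [Field k]
    (F : Set (Set G)) (hWF : ∀ A ∈ F, A.IsWF)
    (hS1 : ∀ g : G, ({g} : Set G) ∈ F)
    (hS2 : ∀ A ∈ F, ∀ B ⊆ A, B ∈ F)
    (hS3 : ∀ A ∈ F, ∀ B ∈ F, A ∪ B ∈ F)
    (hA2 : ∀ A ∈ F, ∀ B ∈ F, A + B ∈ F)
    (hA4 : ∀ A ∈ F, A ⊆ {g : G | 0 ≤ g} → (AddSubmonoid.closure A : Set G) ∈ F) :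
    ∃ K : Subfield (HahnSeries G k),
      (K : Set (HahnSeries G k)) = {a : HahnSeries G k | a.support ∈ F} ∧
      ∀ (α : k) (g : G), HahnSeries.single g α ∈ K :=
  khull_is_hahnField_general F hS1 hS2 hS3 hA2 hA4
end

section
/- Suppose char(k) = 0. Then k((F)) is a subfield of k((G)) if and only if F satisfies (S2) closure under subsets, (S3) closure under finite unions, (S4) {0} ∈ F, (A2) closure under sumsets, (A4) for A ∈ F with A ⊆ G^{≥0}, the set of finite sums of elements of A belongs to F, and (A5) {g} ∈ F implies {−g} ∈ F. -/
/-!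
The indicator series `∑_{g ∈ A} t^g` has support `A`. Sums and products of two of them have
positive integer coefficients on `A ∪ B` and on `A + B`, which do not vanish in characteristic
zero; so a subfield of the form `k((F))` forces (S2), (S3) and (A2). For `x` of positive order,
`(1 - x)⁻¹ = ∑ xⁿ` has support inside the additive monoid generated by `supp x`, with equality
when the coefficients of `x` are non-negative rationals, as then no cancellation can occur;
computing over `ℚ` and mapping to `k` gives (A4). Conversely, writing `a = c t^v (1 - z)` with
`v` the order of `a` and `z` of positive order bounds `supp a⁻¹` by `-v + ⟨supp z⟩` and
`supp z` by `-v + supp a`, which (S2), (A2), (A4) and (A5) keep inside `F`.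
-/

open scoped Pointwise

namespace HahnSeries

section Indicator

variable {Γ R : Type*} [PartialOrder Γ]

noncomputable def indicator [Zero R] (A : Set Γ) (hA : A.IsPWO) (c : R) : R⟦Γ⟧ where
  coeff := A.indicator fun _ => c
  isPWO_support' := hA.mono Set.support_indicator_subset

variable {A B : Set Γ} {hA : A.IsPWO} {hB : B.IsPWO}

@[simp]
theorem coeff_indicator [Zero R] (c : R) (g : Γ) :
    (indicator A hA c).coeff g = A.indicator (fun _ => c) g :=
  rfl

theorem support_indicator [Zero R] {c : R} (hc : c ≠ 0) : (indicator A hA c).support = A := by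
  change Function.support (A.indicator fun _ => c) = A
  rw [Set.support_indicator, Function.support_const hc, Set.inter_univ]

theorem coeff_indicator_nonneg [Zero R] [Preorder R] {c : R} (hc : 0 ≤ c) (g : Γ) :
    0 ≤ (indicator A hA c).coeff g :=
  Set.indicator_nonneg (fun _ _ => hc) g

theorem map_indicator {S F : Type*} [Zero R] [Zero S] [FunLike F R S] [ZeroHomClass F R S]
    (f : F) (c : R) : (indicator A hA c).map f = indicator A hA (f c) := by
  ext g
  by_cases hg : g ∈ A <;> simp [hg]

theorem support_indicator_add_indicator [AddMonoid R] {c d : R} (hc : c ≠ 0) (hd : d ≠ 0)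
    (hcd : c + d ≠ 0) : (indicator A hA c + indicator B hB d).support = A ∪ B := by
  ext g
  by_cases hgA : g ∈ A <;> by_cases hgB : g ∈ B <;> simp [hgA, hgB, hc, hd, hcd]

end Indicator

section Map

variable {Γ R S : Type*} [PartialOrder Γ]

theorem support_map_of_injective {F : Type*} [Zero R] [Zero S] [FunLike F R S]
    [ZeroHomClass F R S] {f : F} (hf : Function.Injective f) (x : R⟦Γ⟧) :
    (x.map f).support = x.support := by
  ext g
  simp [hf.ne_iff' (map_zero f)]

def mapRingHom [AddCommMonoid Γ] [IsOrderedCancelAddMonoid Γ] [Semiring R] [Semiring S]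
    (f : R →+* S) : R⟦Γ⟧ →+* S⟦Γ⟧ where
  toFun x := x.map f
  map_zero' := HahnSeries.map_zero f.toAddMonoidHom.toZeroHom
  map_one' := HahnSeries.map_one f.toMonoidWithZeroHom
  map_add' _ _ := HahnSeries.map_add f.toAddMonoidHom
  map_mul' _ _ := HahnSeries.map_mul f.toNonUnitalRingHom

theorem mapRingHom_apply [AddCommMonoid Γ] [IsOrderedCancelAddMonoid Γ] [Semiring R] [Semiring S]
    (f : R →+* S) (x : R⟦Γ⟧) : mapRingHom f x = x.map f :=
  rfl

end Map

section Closure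

variable {Γ R : Type*} [AddCommMonoid Γ] [PartialOrder Γ] [IsOrderedCancelAddMonoid Γ]

theorem support_pow_subset_closure [Semiring R] (x : R⟦Γ⟧) (n : ℕ) :
    (x ^ n).support ⊆ AddSubmonoid.closure x.support := by
  induction n with
  | zero =>
    rw [pow_zero, ← single_zero_one]
    exact support_single_subset.trans (Set.singleton_subset_iff.mpr (zero_mem _))
  | succ n ih =>
    rw [pow_succ]
    refine support_mul_subset.trans ?_
    rintro _ ⟨a, ha, b, hb, rfl⟩
    exact add_mem (ih ha) (AddSubmonoid.subset_closure hb)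

end Closure

section Nonneg

variable {Γ R : Type*} [AddCommMonoid Γ] [PartialOrder Γ] [IsOrderedCancelAddMonoid Γ]
  [Semiring R] [PartialOrder R] {x y : R⟦Γ⟧}

theorem coeff_mul_nonneg [IsOrderedRing R] (hx : ∀ g, 0 ≤ x.coeff g) (hy : ∀ g, 0 ≤ y.coeff g)
    (g : Γ) : 0 ≤ (x * y).coeff g := by
  rw [coeff_mul]
  exact Finset.sum_nonneg fun _ _ => mul_nonneg (hx _) (hy _)

theorem coeff_pow_nonneg [IsOrderedRing R] (hx : ∀ g, 0 ≤ x.coeff g) (n : ℕ) (g : Γ) :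
    0 ≤ (x ^ n).coeff g := by
  induction n generalizing g with
  | zero =>
    rw [pow_zero, coeff_one]
    split_ifs <;> simp
  | succ n ih =>
    rw [pow_succ]
    exact coeff_mul_nonneg ih hx g

theorem support_mul_of_nonneg [IsStrictOrderedRing R] (hx : ∀ g, 0 ≤ x.coeff g)
    (hy : ∀ g, 0 ≤ y.coeff g) : (x * y).support = x.support + y.support := by
  refine support_mul_subset.antisymm ?_
  rintro _ ⟨a, ha, b, hb, rfl⟩
  rw [mem_support, coeff_mul]
  refine (Finset.sum_pos' (fun _ _ => mul_nonneg (hx _) (hy _)) ⟨(a, b), ?_, ?_⟩).ne'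
  · exact Finset.mem_antidiagonal.mpr ⟨ha, hb, rfl⟩
  · exact mul_pos ((hx a).lt_of_ne' ha) ((hy b).lt_of_ne' hb)

theorem iUnion_support_pow_of_nonneg [IsStrictOrderedRing R] (hx : ∀ g, 0 ≤ x.coeff g) :
    ⋃ n : ℕ, (x ^ n).support = AddSubmonoid.closure x.support := by
  refine (Set.iUnion_subset (support_pow_subset_closure x)).antisymm fun g hg => ?_
  induction hg using AddSubmonoid.closure_induction with
  | mem g hg => exact Set.mem_iUnion.mpr ⟨1, by rwa [pow_one]⟩
  | zero => exact Set.mem_iUnion.mpr ⟨0, by simp⟩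
  | add a b _ _ ha hb =>
    obtain ⟨m, hm⟩ := Set.mem_iUnion.mp ha
    obtain ⟨n, hn⟩ := Set.mem_iUnion.mp hb
    refine Set.mem_iUnion.mpr ⟨m + n, ?_⟩
    rw [_root_.pow_add, support_mul_of_nonneg (coeff_pow_nonneg hx m) (coeff_pow_nonneg hx n)]
    exact Set.add_mem_add hm hn

end Nonneg

theorem SummableFamily.support_hsum_of_nonneg {Γ R α : Type*} [PartialOrder Γ] [AddCommMonoid R]
    [PartialOrder R] [IsOrderedCancelAddMonoid R] (s : SummableFamily Γ R α)
    (hs : ∀ a g, 0 ≤ (s a).coeff g) : s.hsum.support = ⋃ a, (s a).support := by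
  refine support_hsum_subset.antisymm fun g hg => ?_
  obtain ⟨a, ha⟩ := Set.mem_iUnion.mp hg
  rw [mem_support, coeff_hsum]
  exact (finsum_pos (fun a => hs a g) ⟨a, (hs a g).lt_of_ne' ha⟩ (s.finite_co_support g)).ne'

section Inverse

variable {Γ R : Type*} [AddCommGroup Γ] [LinearOrder Γ] [IsOrderedAddMonoid Γ] [Field R]
  {x : R⟦Γ⟧}

theorem inv_one_sub_eq_hsum_powers (hx : 0 < x.orderTop) :
    (1 - x)⁻¹ = (SummableFamily.powers x).hsum :=
  inv_eq_of_mul_eq_one_right (SummableFamily.one_sub_self_mul_hsum_powers hx)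

theorem support_inv_one_sub_subset (hx : 0 < x.orderTop) :
    (1 - x)⁻¹.support ⊆ AddSubmonoid.closure x.support := by
  rw [inv_one_sub_eq_hsum_powers hx]
  refine SummableFamily.support_hsum_subset.trans (Set.iUnion_subset fun n => ?_)
  rw [SummableFamily.coe_powers hx]
  exact support_pow_subset_closure x n

theorem support_inv_one_sub_of_nonneg [PartialOrder R] [IsStrictOrderedRing R]
    (hx : 0 < x.orderTop) (hnn : ∀ g, 0 ≤ x.coeff g) :
    (1 - x)⁻¹.support = AddSubmonoid.closure x.support := by
  rw [inv_one_sub_eq_hsum_powers hx, SummableFamily.support_hsum_of_nonneg]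
  · simp only [SummableFamily.coe_powers hx]
    exact iUnion_support_pow_of_nonneg hnn
  · simpa only [SummableFamily.coe_powers hx] using coeff_pow_nonneg hnn

theorem orderTop_pos_of_support_pos (hx : ∀ g ∈ x.support, 0 < g) : 0 < x.orderTop := by
  rcases eq_or_ne x 0 with rfl | hx0
  · simp
  · exact zero_lt_orderTop_of_order (hx _ (coeff_order_eq_zero.not.mpr hx0))

theorem exists_support_inv_subset (a : R⟦Γ⟧) : ∃ z : R⟦Γ⟧, 0 < z.orderTop ∧
    z.support ⊆ {-a.order} + a.support ∧
    a⁻¹.support ⊆ {-a.order} + AddSubmonoid.closure z.support := by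
  rcases eq_or_ne a 0 with rfl | ha
  · exact ⟨0, by simp, by simp, by simp⟩
  set u := single (-a.order) a.leadingCoeff⁻¹ * a
  have hz : 0 < (1 - u).orderTop :=
    unit_aux a (inv_mul_cancel₀ (leadingCoeff_ne_zero.mpr ha)) _ (neg_add_cancel a.order)
  refine ⟨1 - u, hz, ?_, ?_⟩
  · have hu : u.support ⊆ {-a.order} + a.support :=
      support_mul_subset.trans (Set.add_subset_add_right support_single_subset)
    refine (support_sub_subset _ _).trans (Set.union_subset ?_ hu)
    rw [support_one]
    exact Set.singleton_subset_iff.mpr ⟨-a.order, rfl, a.order, coeff_order_eq_zero.not.mpr ha,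
      neg_add_cancel _⟩
  · rw [inv_def, ← inv_one_sub_eq_hsum_powers hz]
    exact support_mul_subset.trans
      (Set.add_subset_add support_single_subset (support_inv_one_sub_subset hz))

end Inverse

section CharZero

variable {Γ k : Type*}

theorem indicator_one_eq_mapRingHom [AddCommMonoid Γ] [PartialOrder Γ] [IsOrderedCancelAddMonoid Γ]
    [DivisionRing k] [CharZero k] {A : Set Γ} (hA : A.IsPWO) :
    indicator A hA (1 : k) = mapRingHom (Rat.castHom k) (indicator A hA 1) := by
  rw [mapRingHom_apply, map_indicator, map_one]

theorem support_indicator_mul_indicator [AddCommMonoid Γ] [PartialOrder Γ]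
    [IsOrderedCancelAddMonoid Γ] [DivisionRing k] [CharZero k] {A B : Set Γ} (hA : A.IsPWO)
    (hB : B.IsPWO) : (indicator A hA (1 : k) * indicator B hB 1).support = A + B := by
  rw [indicator_one_eq_mapRingHom hA, indicator_one_eq_mapRingHom hB, ← map_mul, mapRingHom_apply,
    support_map_of_injective Rat.cast_injective,
    support_mul_of_nonneg (coeff_indicator_nonneg zero_le_one) (coeff_indicator_nonneg zero_le_one),
    support_indicator one_ne_zero, support_indicator one_ne_zero]

theorem support_inv_one_sub_indicator [AddCommGroup Γ] [LinearOrder Γ] [IsOrderedAddMonoid Γ]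
    [Field k] [CharZero k] {B : Set Γ} (hB : B.IsPWO) (hpos : ∀ b ∈ B, 0 < b) :
    (1 - indicator B hB (1 : k))⁻¹.support = AddSubmonoid.closure B := by
  have hq : 0 < (indicator B hB (1 : ℚ)).orderTop :=
    orderTop_pos_of_support_pos (by rwa [support_indicator one_ne_zero])
  rw [indicator_one_eq_mapRingHom, ← map_one (mapRingHom (Rat.castHom k)), ← map_sub, ← map_inv₀,
    mapRingHom_apply, support_map_of_injective Rat.cast_injective,
    support_inv_one_sub_of_nonneg hq (coeff_indicator_nonneg zero_le_one),
    support_indicator one_ne_zero]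

end CharZero

section Hull

variable {G k : Type*} [AddCommGroup G] [LinearOrder G] [IsOrderedAddMonoid G] [Field k]
  {F : Set (Set G)} {K : Subfield k⟦G⟧}

theorem hull_indicator_mem (hK : ∀ a : k⟦G⟧, a ∈ K ↔ a.support ∈ F) (hWF : ∀ A ∈ F, A.IsWF)
    {A : Set G} (hA : A ∈ F) : indicator A (hWF A hA).isPWO (1 : k) ∈ K :=
  (hK _).mpr (by rwa [support_indicator one_ne_zero])

theorem hull_mem_of_subset [NeZero (2 : k)] (hK : ∀ a : k⟦G⟧, a ∈ K ↔ a.support ∈ F)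
    (hWF : ∀ A ∈ F, A.IsWF) {A B : Set G} (hA : A ∈ F) (hBA : B ⊆ A) : B ∈ F := by
  set w := indicator B ((hWF A hA).isPWO.mono hBA) (1 : k)
  have h2 : (1 + 1 : k) ≠ 0 := one_add_one_eq_two (R := k) ▸ two_ne_zero
  have hsum : indicator A (hWF A hA).isPWO 1 + w ∈ K := (hK _).mpr (by
    rwa [support_indicator_add_indicator one_ne_zero one_ne_zero h2, Set.union_eq_left.mpr hBA])
  have hw : w ∈ K := by simpa using sub_mem hsum (hull_indicator_mem hK hWF hA)
  simpa [w, support_indicator one_ne_zero] using (hK w).mp hw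

theorem hull_union_mem [NeZero (2 : k)] (hK : ∀ a : k⟦G⟧, a ∈ K ↔ a.support ∈ F)
    (hWF : ∀ A ∈ F, A.IsWF) {A B : Set G} (hA : A ∈ F) (hB : B ∈ F) : A ∪ B ∈ F := by
  rw [← support_indicator_add_indicator (hA := (hWF A hA).isPWO) (hB := (hWF B hB).isPWO)
    (one_ne_zero (α := k)) one_ne_zero (one_add_one_eq_two (R := k) ▸ two_ne_zero)]
  exact (hK _).mp (add_mem (hull_indicator_mem hK hWF hA) (hull_indicator_mem hK hWF hB))

theorem hull_add_mem [CharZero k] (hK : ∀ a : k⟦G⟧, a ∈ K ↔ a.support ∈ F)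
    (hWF : ∀ A ∈ F, A.IsWF) {A B : Set G} (hA : A ∈ F) (hB : B ∈ F) : A + B ∈ F := by
  rw [← support_indicator_mul_indicator (k := k) (hWF A hA).isPWO (hWF B hB).isPWO]
  exact (hK _).mp (mul_mem (hull_indicator_mem hK hWF hA) (hull_indicator_mem hK hWF hB))

theorem hull_closure_mem [CharZero k] (hK : ∀ a : k⟦G⟧, a ∈ K ↔ a.support ∈ F)
    (hWF : ∀ A ∈ F, A.IsWF) {A : Set G} (hA : A ∈ F) (hA0 : A ⊆ {g | 0 ≤ g}) :
    (AddSubmonoid.closure A : Set G) ∈ F := by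
  have hB : A \ {0} ∈ F := hull_mem_of_subset hK hWF hA Set.sdiff_subset
  have hpos : ∀ b ∈ A \ {0}, 0 < b := fun b hb => (hA0 hb.1).lt_of_ne' hb.2
  rw [← AddSubmonoid.closure_sdiff_singleton_zero,
    ← support_inv_one_sub_indicator (k := k) (hWF _ hB).isPWO hpos]
  exact (hK _).mp (inv_mem (sub_mem (one_mem K) (hull_indicator_mem hK hWF hB)))

theorem hull_neg_singleton_mem (hK : ∀ a : k⟦G⟧, a ∈ K ↔ a.support ∈ F) {g : G}
    (hg : {g} ∈ F) : {-g} ∈ F := by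
  have hsingle : single g (1 : k) ∈ K := (hK _).mpr (by rwa [support_single_of_ne one_ne_zero])
  have h := (hK _).mp (inv_mem hsingle)
  rwa [inv_single, inv_one, support_single_of_ne one_ne_zero] at h

theorem support_inv_mem (hS2 : ∀ A ∈ F, ∀ B ⊆ A, B ∈ F) (hA2 : ∀ A ∈ F, ∀ B ∈ F, A + B ∈ F)
    (hA4 : ∀ A ∈ F, A ⊆ {g : G | 0 ≤ g} → (AddSubmonoid.closure A : Set G) ∈ F)
    (hA5 : ∀ g : G, ({g} : Set G) ∈ F → ({-g} : Set G) ∈ F) {a : k⟦G⟧} (ha : a.support ∈ F) :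
    a⁻¹.support ∈ F := by
  rcases eq_or_ne a 0 with rfl | ha0
  · simpa using ha
  obtain ⟨z, hz, hzsupp, hinv⟩ := exists_support_inv_subset a
  have hneg : {-a.order} ∈ F :=
    hA5 _ (hS2 _ ha _ (Set.singleton_subset_iff.mpr (coeff_order_eq_zero.not.mpr ha0)))
  have hzF : z.support ∈ F := hS2 _ (hA2 _ hneg _ ha) _ hzsupp
  have hz0 : z.support ⊆ {g | 0 ≤ g} := fun g hg =>
    WithTop.coe_le_coe.mp (hz.le.trans (orderTop_le_of_coeff_ne_zero hg))
  exact hS2 _ (hA2 _ hneg _ (hA4 _ hzF hz0)) _ hinv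

def hullSubfield (hS2 : ∀ A ∈ F, ∀ B ⊆ A, B ∈ F) (hS3 : ∀ A ∈ F, ∀ B ∈ F, A ∪ B ∈ F)
    (hS4 : ({0} : Set G) ∈ F) (hA2 : ∀ A ∈ F, ∀ B ∈ F, A + B ∈ F)
    (hA4 : ∀ A ∈ F, A ⊆ {g : G | 0 ≤ g} → (AddSubmonoid.closure A : Set G) ∈ F)
    (hA5 : ∀ g : G, ({g} : Set G) ∈ F → ({-g} : Set G) ∈ F) : Subfield k⟦G⟧ where
  carrier := {a | a.support ∈ F}
  zero_mem' := by simpa using hS2 _ hS4 ∅ (Set.empty_subset _)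
  one_mem' := by simpa using hS4
  add_mem' ha hb := hS2 _ (hS3 _ ha _ hb) _ (support_add_subset _ _)
  neg_mem' ha := by simpa using ha
  mul_mem' ha hb := hS2 _ (hA2 _ ha _ hb) _ support_mul_subset
  inv_mem' _ ha := support_inv_mem hS2 hA2 hA4 hA5 ha

end Hull

end HahnSeries

/-- Suppose `char k = 0`. Then the `k`-hull `k((F))` is a subfield of
`k((G))` if and only if `F` satisfies (S2) closure under subsets, (S3) closure under finite
unions, (S4) `{0} ∈ F`, (A2) closure under sumsets, (A4) for `A ∈ F` with `A ⊆ G^{≥0}` the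
set of finite sums of elements of `A` belongs to `F`, and (A5) `{g} ∈ F → {−g} ∈ F`. -/
theorem khull_subfield_iff_charZero
    {G : Type*} [AddCommGroup G] [LinearOrder G] [IsOrderedAddMonoid G] {k : Type*} [Field k] [CharZero k]
    (F : Set (Set G)) (hWF : ∀ A ∈ F, A.IsWF) :
    (∃ K : Subfield (HahnSeries G k),
        (K : Set (HahnSeries G k)) = {a : HahnSeries G k | a.support ∈ F}) ↔
      ((∀ A ∈ F, ∀ B ⊆ A, B ∈ F) ∧
       (∀ A ∈ F, ∀ B ∈ F, A ∪ B ∈ F) ∧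
       (({0} : Set G) ∈ F) ∧
       (∀ A ∈ F, ∀ B ∈ F, A + B ∈ F) ∧
       (∀ A ∈ F, A ⊆ {g : G | 0 ≤ g} → (AddSubmonoid.closure A : Set G) ∈ F) ∧
       (∀ g : G, ({g} : Set G) ∈ F → ({-g} : Set G) ∈ F)) := by
  constructor
  · rintro ⟨K, hK⟩
    have hmem (a : HahnSeries G k) : a ∈ K ↔ a.support ∈ F := by
      rw [← SetLike.mem_coe, hK]
      rfl
    exact ⟨fun A hA B hBA => HahnSeries.hull_mem_of_subset hmem hWF hA hBA,
      fun A hA B hB => HahnSeries.hull_union_mem hmem hWF hA hB,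
      by simpa using (hmem 1).mp K.one_mem,
      fun A hA B hB => HahnSeries.hull_add_mem hmem hWF hA hB,
      fun A hA hA0 => HahnSeries.hull_closure_mem hmem hWF hA hA0,
      fun g => HahnSeries.hull_neg_singleton_mem hmem⟩
  · rintro ⟨hS2, hS3, hS4, hA2, hA4, hA5⟩
    exact ⟨HahnSeries.hullSubfield hS2 hS3 hS4 hA2 hA4 hA5, rfl⟩
end
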